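/- Let H_0 and V be Hermitian operators on a finite-dimensional complex inner product space. Let P be the orthogonal projection onto the E_0-eigenspace of H_0 and Q = 1 − P. Let ω be a real number that is not an eigenvalue of the restriction of H_0 to the range of Q, and let G_0(ω) be the operator that vanishes on the range of P and equals the inverse of (ω − H_0) on the range of Q (so G_0(ω)(ω − H_0) = (ω − H_0)G_0(ω) = Q and G_0(ω)P = P G_0(ω) = 0). Let s be a real number with ‖s G_0(ω) V‖ < 1, and define the effective Hamiltonian h(ω,s) = P H_0 P + P s V (Σ_{k≥0} (s G_0(ω) V)^k) P (the series converging in operator norm). Suppose ξ is a vector in the range of P with h(ω,s) ξ = ω ξ. Then the vector Φ_s = Σ_{k≥0} (s G_0(ω) V)^k ξ satisfies (H_0 + sV) Φ_s = ω Φ_s. -/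

import Mathlib

/-- The orthogonal projection onto a subspace, as a continuous operator on the whole space. -/
noncomputable def projCLM {E : Type*} [NormedAddCommGroup E] [InnerProductSpace ℂ E]
    (K : Submodule ℂ E) [K.HasOrthogonalProjection] : E →L[ℂ] E :=
  K.subtypeL ∘L K.orthogonalProjectionOnto

/-- Brillouin–Wigner perturbation theory. With `P` the orthogonal projection onto
the `E0`-eigenspace of `H0`, `Q = 1 − P`, `G0` the pseudo-inverse of `(ω − H0)` on the range of
`Q` (vanishing on the range of `P`), `‖s G0 V‖ < 1`, and `ξ` in the range of `P` an eigenvector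
of the effective Hamiltonian `h(ω,s) = P H0 P + P sV (Σ_k (s G0 V)^k) P` with eigenvalue `ω`,
the vector `Φ_s = Σ_k (s G0 V)^k ξ` satisfies `(H0 + sV) Φ_s = ω Φ_s`. -/
theorem brillouin_wigner_eigenvector
    {E : Type*} [NormedAddCommGroup E] [InnerProductSpace ℂ E] [FiniteDimensional ℂ E]
    (H0 V G0 : E →L[ℂ] E) (hH0 : IsSelfAdjoint H0) (hV : IsSelfAdjoint V)
    (E0 ω s : ℝ)
    (hG0P : G0 * projCLM (Module.End.eigenspace (H0 : E →ₗ[ℂ] E) (E0 : ℂ)) = 0)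
    (hPG0 : projCLM (Module.End.eigenspace (H0 : E →ₗ[ℂ] E) (E0 : ℂ)) * G0 = 0)
    (hG0l : G0 * ((ω : ℂ) • (1 : E →L[ℂ] E) - H0)
      = 1 - projCLM (Module.End.eigenspace (H0 : E →ₗ[ℂ] E) (E0 : ℂ)))
    (hG0r : ((ω : ℂ) • (1 : E →L[ℂ] E) - H0) * G0
      = 1 - projCLM (Module.End.eigenspace (H0 : E →ₗ[ℂ] E) (E0 : ℂ)))
    (hs : ‖(s : ℂ) • (G0 * V)‖ < 1)
    (ξ : E)
    (hξP : projCLM (Module.End.eigenspace (H0 : E →ₗ[ℂ] E) (E0 : ℂ)) ξ = ξ)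
    (hξeig :
      (projCLM (Module.End.eigenspace (H0 : E →ₗ[ℂ] E) (E0 : ℂ)) * H0
          * projCLM (Module.End.eigenspace (H0 : E →ₗ[ℂ] E) (E0 : ℂ))
        + projCLM (Module.End.eigenspace (H0 : E →ₗ[ℂ] E) (E0 : ℂ)) * ((s : ℂ) • V)
          * (∑' k : ℕ, ((s : ℂ) • (G0 * V)) ^ k)
          * projCLM (Module.End.eigenspace (H0 : E →ₗ[ℂ] E) (E0 : ℂ))) ξ
        = (ω : ℂ) • ξ) :
    (H0 + (s : ℂ) • V) ((∑' k : ℕ, ((s : ℂ) • (G0 * V)) ^ k) ξ)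
      = (ω : ℂ) • ((∑' k : ℕ, ((s : ℂ) • (G0 * V)) ^ k) ξ) := by
  set K := Module.End.eigenspace (H0 : E →ₗ[ℂ] E) (E0 : ℂ) with hK
  set P : E →L[ℂ] E := projCLM K with hPdef
  set A : E →L[ℂ] E := (s : ℂ) • (G0 * V) with hA
  set S : E →L[ℂ] E := ∑' k : ℕ, A ^ k with hS
  have hξK : ξ ∈ K := by
    rw [← hξP]
    exact Submodule.coe_mem ((K.orthogonalProjectionOnto) ξ)
  have hH0ξ : H0 ξ = (E0 : ℂ) • ξ := Module.End.mem_eigenspace_iff.mp hξK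
  have hu : (1 - A) * S = 1 := (Units.oneSub A hs).val_inv
  have hu' : S - A * S = 1 := by rw [sub_mul, one_mul] at hu; exact hu
  have hAS : A * S = S - 1 := by
    rw [sub_eq_iff_eq_add] at hu'
    rw [eq_sub_iff_add_eq, add_comm]
    exact hu'.symm
  have hΦ : S ξ = ξ + (s : ℂ) • G0 (V (S ξ)) := by
    have h := congrArg (fun f : E →L[ℂ] E => f ξ) hAS
    simp only [hA, ContinuousLinearMap.sub_apply, ContinuousLinearMap.one_apply,
      ContinuousLinearMap.mul_apply, ContinuousLinearMap.smul_apply] at h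
    rw [h]; abel
  have hPH0 : P (H0 ξ) = (E0 : ℂ) • ξ := by
    rw [hH0ξ, map_smul, hξP]
  have heig : P (H0 ξ) + (s : ℂ) • P (V (S ξ)) = (ω : ℂ) • ξ := by
    have h := hξeig
    simp only [ContinuousLinearMap.add_apply, ContinuousLinearMap.mul_apply,
      ContinuousLinearMap.smul_apply, map_smul, hξP] at h
    exact h
  have hPVS : (s : ℂ) • P (V (S ξ)) = (ω : ℂ) • ξ - (E0 : ℂ) • ξ := by
    rw [← heig, hPH0]; abel
  have key : (ω : ℂ) • (S ξ) - H0 (S ξ) = (s : ℂ) • V (S ξ) := by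
    have hQ : ∀ y : E, (ω : ℂ) • (G0 y) - H0 (G0 y) = y - P y := by
      intro y
      have := congrArg (fun f : E →L[ℂ] E => f y) hG0r
      simpa [ContinuousLinearMap.mul_apply, ContinuousLinearMap.sub_apply,
        ContinuousLinearMap.smul_apply, ContinuousLinearMap.one_apply] using this
    have step : (ω : ℂ) • (S ξ) - H0 (S ξ)
        = ((ω : ℂ) • ξ - H0 ξ) + ((s : ℂ) • (V (S ξ)) - (s : ℂ) • P (V (S ξ))) := by
      calc (ω : ℂ) • (S ξ) - H0 (S ξ)
          = (ω : ℂ) • (ξ + (s : ℂ) • G0 (V (S ξ))) - H0 (ξ + (s : ℂ) • G0 (V (S ξ))) := by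
            rw [← hΦ]
        _ = ((ω : ℂ) • ξ - H0 ξ)
            + (s : ℂ) • ((ω : ℂ) • (G0 (V (S ξ))) - H0 (G0 (V (S ξ)))) := by
            rw [map_add, map_smul, smul_add, smul_sub, smul_comm ((s:ℂ)) ((ω:ℂ))]
            abel
        _ = ((ω : ℂ) • ξ - H0 ξ) + (s : ℂ) • ((V (S ξ)) - P (V (S ξ))) := by
            rw [hQ]
        _ = ((ω : ℂ) • ξ - H0 ξ) + ((s : ℂ) • (V (S ξ)) - (s : ℂ) • P (V (S ξ))) := by
            rw [smul_sub]
    rw [step, hH0ξ, hPVS]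
    abel
  have goal : H0 (S ξ) + (s : ℂ) • V (S ξ) = (ω : ℂ) • (S ξ) := by
    rw [← key]; abel
  simpa only [ContinuousLinearMap.add_apply, ContinuousLinearMap.smul_apply] using goal
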